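/- arXiv:1604.05337 — 4 statements merged into one kernel-verified Lean document; each statement's English description precedes it below -/
import Mathlib

section
/- Any λ-maximal feasible solution to the fractional hypergraph b-matching LP has objective value at least OPT/(λf+1), where OPT is the optimal LP value and f bounds the maximum edge frequency. -/
/-- Any λ-maximal feasible solution to the fractional hypergraph b-matching LP
has objective value at least OPT/(λf+1): equivalently, every feasible solution y
has objective at most (λf+1) times that of the λ-maximal solution x. -/
theorem lambda_maximal_approx {V E : Type*} [Fintype V] [Fintype E] [DecidableEq V]
    (inc : E → Finset V) (c : V → ℝ) (μ lam f : ℝ)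
    (hμ : 1 ≤ μ) (hlam : 1 ≤ lam) (hc : ∀ v, 0 < c v)
    (hf : ∀ e, ((inc e).card : ℝ) ≤ f)
    (x : E → ℝ)
    (hx0 : ∀ e, 0 ≤ x e) (hxμ : ∀ e, x e ≤ μ)
    (hfeas : ∀ v, ∑ e ∈ Finset.univ.filter (fun e => v ∈ inc e), x e ≤ c v)
    (hmax : ∀ e, x e < μ → ∃ v ∈ inc e,
      c v / lam ≤ ∑ e' ∈ Finset.univ.filter (fun e' => v ∈ inc e'), x e')
    (y : E → ℝ)
    (hy0 : ∀ e, 0 ≤ y e) (hyμ : ∀ e, y e ≤ μ)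
    (hyfeas : ∀ v, ∑ e ∈ Finset.univ.filter (fun e => v ∈ inc e), y e ≤ c v) :
    ∑ e, y e ≤ (lam * f + 1) * ∑ e, x e := by
  classical
  set load : V → ℝ := fun v => ∑ e ∈ Finset.univ.filter (fun e => v ∈ inc e), x e with hloaddef
  set S : Finset V := Finset.univ.filter (fun v => c v / lam ≤ load v) with hSdef
  set A : Finset E := Finset.univ.filter (fun e => x e < μ) with hAdef
  have hlam0 : (0:ℝ) < lam := lt_of_lt_of_le one_pos hlam
  have hload0 : ∀ v, 0 ≤ load v := fun v => Finset.sum_nonneg fun e _ => hx0 e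
  -- unsaturated-edge part
  have h1 : ∑ e ∈ Aᶜ, y e ≤ ∑ e ∈ Aᶜ, x e := by
    apply Finset.sum_le_sum
    intro e he
    have hne : ¬ x e < μ := by
      simp only [hAdef, Finset.mem_compl, Finset.mem_filter, Finset.mem_univ, true_and] at he
      exact he
    have hxe : x e = μ := le_antisymm (hxμ e) (not_lt.mp hne)
    rw [hxe]; exact hyμ e
  have h1' : ∑ e ∈ Aᶜ, x e ≤ ∑ e, x e := by
    apply Finset.sum_le_sum_of_subset_of_nonneg (Finset.subset_univ _)
    intro e _ _; exact hx0 e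
  -- rewrite the double sum over S
  have hswap : ∑ v ∈ S, ∑ e ∈ Finset.univ.filter (fun e => v ∈ inc e), y e
      = ∑ e, ((S.filter (fun v => v ∈ inc e)).card : ℝ) * y e := by
    have : ∀ v ∈ S, ∑ e ∈ Finset.univ.filter (fun e => v ∈ inc e), y e
        = ∑ e, (if v ∈ inc e then y e else 0) := by
      intro v _
      rw [Finset.sum_filter]
    rw [Finset.sum_congr rfl this, Finset.sum_comm]
    refine Finset.sum_congr rfl fun e _ => ?_
    rw [← Finset.sum_filter, Finset.sum_const, nsmul_eq_mul]
  -- saturated-edge part bounded by sum over S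
  have h2 : ∑ e ∈ A, y e ≤ ∑ v ∈ S, ∑ e ∈ Finset.univ.filter (fun e => v ∈ inc e), y e := by
    rw [hswap]
    calc ∑ e ∈ A, y e ≤ ∑ e ∈ A, ((S.filter (fun v => v ∈ inc e)).card : ℝ) * y e := by
          apply Finset.sum_le_sum
          intro e he
          have hxe : x e < μ := by
            simp only [hAdef, Finset.mem_filter, Finset.mem_univ, true_and] at he
            exact he
          obtain ⟨v, hv, hvl⟩ := hmax e hxe
          have hvS : v ∈ S.filter (fun v => v ∈ inc e) := by
            simp only [hSdef, Finset.mem_filter, Finset.mem_univ, true_and]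
            exact ⟨hvl, hv⟩
          have hcard : (1:ℝ) ≤ ((S.filter (fun v => v ∈ inc e)).card : ℝ) := by
            exact_mod_cast Finset.card_pos.mpr ⟨v, hvS⟩
          nlinarith [hy0 e]
      _ ≤ ∑ e, ((S.filter (fun v => v ∈ inc e)).card : ℝ) * y e := by
          apply Finset.sum_le_sum_of_subset_of_nonneg (Finset.subset_univ _)
          intro e _ _
          exact mul_nonneg (Nat.cast_nonneg _) (hy0 e)
  -- sum of capacities over S bounded by lam * f * total x
  have h3 : ∑ v ∈ S, ∑ e ∈ Finset.univ.filter (fun e => v ∈ inc e), y e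
      ≤ lam * (f * ∑ e, x e) := by
    calc ∑ v ∈ S, ∑ e ∈ Finset.univ.filter (fun e => v ∈ inc e), y e
        ≤ ∑ v ∈ S, c v := Finset.sum_le_sum fun v _ => hyfeas v
      _ ≤ ∑ v ∈ S, lam * load v := by
          apply Finset.sum_le_sum
          intro v hv
          have hvl : c v / lam ≤ load v := by
            simp only [hSdef, Finset.mem_filter, Finset.mem_univ, true_and] at hv
            exact hv
          rw [div_le_iff₀ hlam0] at hvl
          linarith [hvl]
      _ ≤ ∑ v, lam * load v := by
          apply Finset.sum_le_sum_of_subset_of_nonneg (Finset.subset_univ _)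
          intro v _ _
          exact mul_nonneg (le_of_lt hlam0) (hload0 v)
      _ = lam * ∑ v, load v := by rw [Finset.mul_sum]
      _ ≤ lam * (f * ∑ e, x e) := by
          apply mul_le_mul_of_nonneg_left _ (le_of_lt hlam0)
          have hswap2 : ∑ v, load v = ∑ e, ((inc e).card : ℝ) * x e := by
            simp only [hloaddef]
            rw [Finset.sum_comm' (s := Finset.univ) (t := fun v => Finset.univ.filter (fun e => v ∈ inc e))
              (t' := Finset.univ) (s' := fun e => Finset.univ.filter (fun v => v ∈ inc e))]
            · refine Finset.sum_congr rfl fun e _ => ?_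
              rw [Finset.sum_const, nsmul_eq_mul]
              have hfe : Finset.univ.filter (fun v => v ∈ inc e) = inc e := by
                ext v; simp
              rw [hfe]
            · intro v e
              simp
          rw [hswap2, Finset.mul_sum]
          apply Finset.sum_le_sum
          intro e _
          exact mul_le_mul_of_nonneg_right (hf e) (hx0 e)
  -- combine
  have hsplit : ∑ e, y e = ∑ e ∈ A, y e + ∑ e ∈ Aᶜ, y e :=
    (Finset.sum_add_sum_compl A y).symm
  rw [hsplit]
  have : (lam * f + 1) * ∑ e, x e = lam * (f * ∑ e, x e) + ∑ e, x e := by ring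
  rw [this]
  have := le_trans h2 h3
  linarith [le_trans h1 h1']
end

section
/- If an (α,β)-partition satisfies Invariant 1 (W_v ≤ fαβ·c*_v for all nodes v, and additionally W_v ≥ c*_v for all v with ℓ(v)>0, where c*_v = c_v/(fαβ)), then the edge weights w(e) = μ·β^{-ℓ(e)} form an (fαβ)-maximal feasible solution to the fractional hypergraph b-matching LP. -/
/-- If an (α,β)-partition satisfies Invariant 1 (W_v ≤ fαβ·c*_v for all v, and
c*_v ≤ W_v for all v with ℓ(v) > 0, where c*_v = c_v/(fαβ)), then the weights
w(e) = μ·β^{-ℓ(e)} form an (fαβ)-maximal feasible solution to the LP. -/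
theorem invariant_implies_maximal {V E : Type*} [Fintype E] [DecidableEq V]
    (inc : E → Finset V) (hne : ∀ e, (inc e).Nonempty)
    (c : V → ℝ) (hc : ∀ v, 0 < c v)
    (μ α β f : ℝ) (hμ : 1 ≤ μ) (hα : 1 < α) (hβ : 1 < β) (hf1 : 1 ≤ f)
    (hf : ∀ e, ((inc e).card : ℝ) ≤ f)
    (ℓ : V → ℕ)
    (w : E → ℝ) (hw : ∀ e, w e = μ * β ^ (-(Int.ofNat ((inc e).sup ℓ))))
    (W : V → ℝ)
    (hW : ∀ v, W v = ∑ e ∈ Finset.univ.filter (fun e => v ∈ inc e), w e)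
    (hinv1 : ∀ v, W v ≤ f * α * β * (c v / (f * α * β)))
    (hinv2 : ∀ v, 0 < ℓ v → c v / (f * α * β) ≤ W v) :
    (∀ e, 0 ≤ w e ∧ w e ≤ μ) ∧ (∀ v, W v ≤ c v) ∧
      ∀ e, w e < μ → ∃ v ∈ inc e, c v / (f * α * β) ≤ W v := by
  have hβ0 : (0:ℝ) < β := lt_trans one_pos hβ
  have hμ0 : (0:ℝ) < μ := lt_of_lt_of_le one_pos hμ
  refine ⟨fun e => ?_, fun v => ?_, fun e he => ?_⟩
  · rw [hw e]
    constructor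
    · positivity
    · have h1 : β ^ (-(Int.ofNat ((inc e).sup ℓ))) ≤ 1 := by
        apply zpow_le_one_of_nonpos₀ hβ.le
        simp
      nlinarith [zpow_pos hβ0 (-(Int.ofNat ((inc e).sup ℓ)))]
  · have h := hinv1 v
    have hfab : f * α * β ≠ 0 := by positivity
    rwa [mul_div_cancel₀ _ hfab] at h
  · have hsup : 0 < (inc e).sup ℓ := by
      by_contra h
      push_neg at h
      interval_cases h' : (inc e).sup ℓ
      · rw [hw e, h'] at he
        simp at he
    obtain ⟨v, hv, hlv⟩ := Finset.exists_mem_eq_sup (inc e) (hne e) ℓ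
    exact ⟨v, hv, hinv2 v (hlv ▸ hsup)⟩
end

section
/- In the dynamic algorithm, a passive node is always at level zero: if at some time-step the number of edge insertions incident to v so far, κ_v, satisfies μκ_v < c_v, then ℓ(v) = 0. -/
/-- In the dynamic algorithm, a passive node is always at level zero: if the
number κ_v of edge insertions incident to v so far satisfies μκ_v < c_v, then
ℓ(v) = 0. The dynamics: the node starts at level 0, its weight always satisfies
W_v ≤ μκ_v, its level is incremented only when W_v > c_v and decremented only
when it is positive. -/
theorem passive_node_at_level_zero (μ c : ℝ) (hμ : 0 ≤ μ) (hc : 0 < c)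
    (κ : ℕ → ℕ) (hκ : Monotone κ)
    (W : ℕ → ℝ) (ℓ : ℕ → ℕ)
    (hW : ∀ t, W t ≤ μ * κ t)
    (hℓ0 : ℓ 0 = 0)
    (hdyn : ∀ t, ℓ (t + 1) = ℓ t ∨
      (ℓ (t + 1) = ℓ t + 1 ∧ c < W t) ∨
      (ℓ (t + 1) = ℓ t - 1 ∧ 0 < ℓ t))
    (t : ℕ) (hpassive : μ * κ t < c) :
    ℓ t = 0 := by
  induction t with
  | zero => exact hℓ0
  | succ n ih =>
    have hκn : μ * κ n ≤ μ * κ (n + 1) := by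
      have := hκ (Nat.le_succ n)
      exact mul_le_mul_of_nonneg_left (by exact_mod_cast this) hμ
    have hn0 : ℓ n = 0 := ih (lt_of_le_of_lt hκn hpassive)
    rcases hdyn n with h | ⟨_, hW'⟩ | ⟨_, hpos⟩
    · rw [h, hn0]
    · have : W n < c := lt_of_le_of_lt (hW n) (lt_of_le_of_lt hκn hpassive); linarith
    · omega
end

section
/- Weak-duality approximation for set cover via complementary slackness: given a λ-maximal feasible solution x* to the fractional hypergraph b-matching LP with μ > max_v c_v, the collection S* of sets S with Σ_{e∈E_{v(S)}} x*(e) ≥ c_{v(S)}/λ covers all elements and has total cost Σ_{S∈S*} c_S ≤ λf·Σ_e x*(e), hence is a (λf)-approximately optimal set cover (relative to the LP optimum). -/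
/-- Set-cover via a λ-maximal LP solution: with μ > max_v c_v, the collection
S* of sets (nodes) that are λ-tight covers every element (edge), and its total
cost is at most λf times the LP objective of x*. -/
theorem set_cover_from_lambda_maximal {V E : Type*} [Fintype V] [Fintype E] [DecidableEq V]
    (inc : E → Finset V) (hne : ∀ e, (inc e).Nonempty)
    (c : V → ℝ) (hc : ∀ v, 0 < c v)
    (μ lam f : ℝ) (hμ : ∀ v, c v < μ) (hlam : 1 ≤ lam)
    (hf : ∀ e, ((inc e).card : ℝ) ≤ f)
    (x : E → ℝ) (hx0 : ∀ e, 0 ≤ x e) (hxμ : ∀ e, x e ≤ μ)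
    (hfeas : ∀ v, ∑ e ∈ Finset.univ.filter (fun e => v ∈ inc e), x e ≤ c v)
    (hmax : ∀ e, x e < μ → ∃ v ∈ inc e,
      c v / lam ≤ ∑ e' ∈ Finset.univ.filter (fun e' => v ∈ inc e'), x e')
    (Sstar : Finset V)
    (hSstar : ∀ v, v ∈ Sstar ↔
      c v / lam ≤ ∑ e ∈ Finset.univ.filter (fun e => v ∈ inc e), x e) :
    (∀ e, ∃ v ∈ inc e, v ∈ Sstar) ∧
      ∑ v ∈ Sstar, c v ≤ lam * f * ∑ e, x e := by
  have hlam0 : 0 < lam := lt_of_lt_of_le one_pos hlam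
  have hxlt : ∀ e, x e < μ := by
    intro e
    obtain ⟨v, hv⟩ := hne e
    have h1 : x e ≤ ∑ e' ∈ Finset.univ.filter (fun e' => v ∈ inc e'), x e' :=
      Finset.single_le_sum (fun e' _ => hx0 e')
        (Finset.mem_filter.mpr ⟨Finset.mem_univ e, hv⟩)
    exact lt_of_le_of_lt (h1.trans (hfeas v)) (hμ v)
  constructor
  · intro e
    obtain ⟨v, hv, hvt⟩ := hmax e (hxlt e)
    exact ⟨v, hv, (hSstar v).mpr hvt⟩
  · have h1 : ∀ v ∈ Sstar, c v ≤ lam * ∑ e ∈ Finset.univ.filter (fun e => v ∈ inc e), x e := by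
      intro v hv
      have := (hSstar v).mp hv
      calc c v = lam * (c v / lam) := by field_simp
        _ ≤ lam * _ := by exact mul_le_mul_of_nonneg_left this hlam0.le
    calc ∑ v ∈ Sstar, c v
        ≤ ∑ v ∈ Sstar, lam * ∑ e ∈ Finset.univ.filter (fun e => v ∈ inc e), x e :=
          Finset.sum_le_sum h1
      _ ≤ ∑ v : V, lam * ∑ e ∈ Finset.univ.filter (fun e => v ∈ inc e), x e := by
          apply Finset.sum_le_sum_of_subset_of_nonneg (Finset.subset_univ _)
          intro v _ _
          exact mul_nonneg hlam0.le (Finset.sum_nonneg fun e _ => hx0 e)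
      _ = lam * ∑ v : V, ∑ e ∈ Finset.univ.filter (fun e => v ∈ inc e), x e := by
          rw [Finset.mul_sum]
      _ = lam * ∑ e, ((inc e).card : ℝ) * x e := by
          congr 1
          simp only [Finset.sum_filter]
          rw [Finset.sum_comm]
          congr 1; ext e
          rw [Finset.sum_ite_mem, Finset.univ_inter, Finset.sum_const, nsmul_eq_mul]
      _ ≤ lam * ∑ e, f * x e := by
          apply mul_le_mul_of_nonneg_left _ hlam0.le
          exact Finset.sum_le_sum fun e _ => mul_le_mul_of_nonneg_right (hf e) (hx0 e)
      _ = lam * f * ∑ e, x e := by rw [← Finset.mul_sum, mul_assoc]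
end
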